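/- Suppose in addition that ψ† has a B†-Lipschitz gradient with B† ≥ β†, that there exists a differentiable convex function φ† : ℝ^D → ℝ with ∇ψ†(∇φ†(y)) = y and ∇φ†(∇ψ†(x)) = x for all x, y and with ∇φ† Lipschitz with constant 1/β†, and that Corr(P, Q | ψ†, φ‡; λ) ≤ Corr(P, Q) + ε for some ε ≥ 0. Then the forward generative property holds: W₂²((∇ψ†)_*P, Q) ≤ ((B†)² · ε / (λβ† − 1)) · (1/√β† + √λ)². -/

import Mathlib

open MeasureTheory ENNReal
open scoped RealInnerProductSpace

/-- Squared Wasserstein-2 distance: infimum over couplings of `∫ ‖x - y‖² / 2`. -/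
noncomputable def W2sq {E : Type*} [NormedAddCommGroup E] [MeasurableSpace E]
    (μ ν : Measure E) : ℝ≥0∞ :=
  ⨅ (π : Measure (E × E)) (_ : IsProbabilityMeasure π)
    (_ : π.map Prod.fst = μ) (_ : π.map Prod.snd = ν),
    ∫⁻ p, ENNReal.ofReal (‖p.1 - p.2‖ ^ 2 / 2) ∂π

/-!
For `y ∼ Q` put `x = ∇φ*(y)` (so `x ∼ P` and `∇ψ*(x) = y`) and `c = ∇φ‡(y)`. Strong convexity
of `ψ†` and Cauchy–Schwarz bound the pointwise excess of the regularized correlations over the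
true ones from below by `(λ/2) a² - a b + (β†/2) b²`, where `a = ‖∇ψ†(c) - y‖`, `b = ‖x - c‖`;
the Lipschitz bound gives `‖∇ψ†(x) - y‖ ≤ B† (b + a/β†)`. Comparing these two quadratic forms
bounds `‖∇ψ†(x) - y‖²` by a multiple of the excess, whose `Q`-integral is at most `ε`, and the
coupling `(∇ψ†, ∇ψ*)_* P` of `(∇ψ†)_* P` and `Q` turns this into the bound on `W₂²`.
-/

theorem ConvexOn.add_le_of_hasFDerivAt {E : Type*} [NormedAddCommGroup E] [NormedSpace ℝ E]
    {s : Set E} {f : E → ℝ} {f' : E →L[ℝ] ℝ} {u v : E} (hf : ConvexOn ℝ s f) (hu : u ∈ s)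
    (hv : v ∈ s) (hd : HasFDerivAt f f' u) : f u + f' (v - u) ≤ f v := by
  let ℓ : ℝ →ᵃ[ℝ] E := AffineMap.lineMap u v
  have h0 : ℓ 0 = u := AffineMap.lineMap_apply_zero u v
  have h1 : ℓ 1 = v := AffineMap.lineMap_apply_one u v
  have hline : ConvexOn ℝ (ℓ ⁻¹' s) (f ∘ ℓ) := hf.comp_affineMap ℓ
  have hderiv : HasDerivAt (f ∘ ℓ) (f' (v - u)) 0 := by
    have hd' : HasFDerivAt f f' (ℓ 0) := by rwa [h0]
    exact hd'.comp_hasDerivAt 0 AffineMap.hasDerivAt_lineMap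
  have hslope := hline.le_slope_of_hasDerivAt (by rwa [Set.mem_preimage, h0])
    (by rwa [Set.mem_preimage, h1]) one_pos hderiv
  rw [slope_def_field] at hslope
  simp only [Function.comp_apply, h0, h1, sub_zero, div_one] at hslope
  linarith

theorem StrongConvexOn.add_inner_add_le_of_hasGradientAt {E : Type*} [NormedAddCommGroup E]
    [InnerProductSpace ℝ E] [CompleteSpace E] {s : Set E} {m : ℝ} {f : E → ℝ} {g u v : E}
    (hf : StrongConvexOn s m f) (hu : u ∈ s) (hv : v ∈ s) (hd : HasGradientAt f g u) :
    f u + ⟪g, v - u⟫ + m / 2 * ‖v - u‖ ^ 2 ≤ f v := by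
  have hconv := (strongConvexOn_iff_convex.1 hf).add_le_of_hasFDerivAt hu hv
    (hd.hasFDerivAt.sub ((hasFDerivAt_id u).norm_sq.const_mul (m / 2)))
  simp only [id_eq, ContinuousLinearMap.comp_id, sub_apply, InnerProductSpace.toDual_apply_apply,
    smul_apply, coe_innerSL_apply, nsmul_eq_mul, Nat.cast_ofNat, smul_eq_mul] at hconv
  have hsq : ‖v - u‖ ^ 2 = ‖v‖ ^ 2 - ‖u‖ ^ 2 - 2 * ⟪u, v - u⟫ := by
    rw [norm_sub_sq_real, inner_sub_right, real_inner_self_eq_norm_sq, real_inner_comm]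
    ring
  rw [hsq]
  linarith

theorem measurable_gradient {E : Type*} [NormedAddCommGroup E] [InnerProductSpace ℝ E]
    [CompleteSpace E] [MeasurableSpace E] [BorelSpace E] (f : E → ℝ) : Measurable (gradient f) :=
  (InnerProductSpace.toDual ℝ E).symm.continuous.measurable.comp (measurable_fderiv ℝ f)

theorem W2sq_map_le {Ω E : Type*} [MeasurableSpace Ω] [NormedAddCommGroup E] [MeasurableSpace E]
    (P : Measure Ω) [IsProbabilityMeasure P] {T S : Ω → E} (hT : Measurable T)
    (hS : Measurable S) :
    W2sq (P.map T) (P.map S) ≤ ∫⁻ ω, ENNReal.ofReal (‖T ω - S ω‖ ^ 2 / 2) ∂P := by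
  have hTS : Measurable fun ω => (T ω, S ω) := hT.prodMk hS
  have hprob := Measure.isProbabilityMeasure_map (μ := P) hTS.aemeasurable
  calc W2sq (P.map T) (P.map S)
      ≤ ∫⁻ p, ENNReal.ofReal (‖p.1 - p.2‖ ^ 2 / 2) ∂(P.map fun ω => (T ω, S ω)) :=
        iInf_le_of_le _ <| iInf_le_of_le hprob <|
          iInf_le_of_le (by rw [Measure.map_map measurable_fst hTS]; rfl) <|
          iInf_le_of_le (by rw [Measure.map_map measurable_snd hTS]; rfl) le_rfl
    _ ≤ _ := lintegral_map_le _ _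

theorem W2sq_map_le_of_leftInverse {E : Type*} [NormedAddCommGroup E] [MeasurableSpace E]
    {P Q : Measure E} [IsProbabilityMeasure P] {G S T : E → E} (hG : Measurable G)
    (hS : Measurable S) (hQP : Q.map T = P) (hPQ : P.map S = Q) (hST : Function.LeftInverse S T) :
    W2sq (P.map G) Q ≤ ∫⁻ y, ENNReal.ofReal (‖G (T y) - y‖ ^ 2 / 2) ∂Q := by
  calc W2sq (P.map G) Q = W2sq (P.map G) (P.map S) := by rw [hPQ]
    _ ≤ ∫⁻ x, ENNReal.ofReal (‖G x - S x‖ ^ 2 / 2) ∂P := W2sq_map_le P hG hS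
    _ ≤ ∫⁻ y, ENNReal.ofReal (‖G (T y) - S (T y)‖ ^ 2 / 2) ∂Q := by
        rw [← hQP]
        exact lintegral_map_le _ T
    _ = _ := by simp only [hST.eq]

theorem sq_add_div_mul_le {β lam a b : ℝ} (hβ : 0 < β) (hlam : 0 ≤ lam) :
    (b + a / β) ^ 2 * (lam * β - 1) ≤
      (1 / √β + √lam) ^ 2 * (lam * a ^ 2 - 2 * a * b + β * b ^ 2) := by
  obtain ⟨p, hp, rfl⟩ : ∃ p, 0 < p ∧ p ^ 2 = β := ⟨√β, Real.sqrt_pos.2 hβ, Real.sq_sqrt hβ.le⟩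
  obtain ⟨r, hr, rfl⟩ : ∃ r, 0 ≤ r ∧ r ^ 2 = lam := ⟨√lam, Real.sqrt_nonneg _, Real.sq_sqrt hlam⟩
  rw [Real.sqrt_sq hp.le, Real.sqrt_sq hr]
  have key : (1 / p + r) ^ 2 * (r ^ 2 * a ^ 2 - 2 * a * b + p ^ 2 * b ^ 2)
      - (b + a / p ^ 2) ^ 2 * (r ^ 2 * p ^ 2 - 1)
      = (1 + p * r) * (2 * (p ^ 2 * b - p * r * a) ^ 2
          + (p * r - 1) ^ 2 * (p * r + 1) * a ^ 2) / p ^ 4 := by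
    field_simp
    ring
  have : 0 ≤ (1 + p * r) * (2 * (p ^ 2 * b - p * r * a) ^ 2
      + (p * r - 1) ^ 2 * (p * r + 1) * a ^ 2) / p ^ 4 := by positivity
  linarith

section CorrelationGap

variable {E : Type*} [NormedAddCommGroup E] [InnerProductSpace ℝ E] [CompleteSpace E]

/-- `Corr(P, Q | ψ, φ; λ) - Corr(P, Q)` is the `Q`-integral of
`correlationGap ψ λ (∇φ*(y)) (∇φ(y)) y` when `P = (∇φ*)_* Q`. -/
noncomputable def correlationGap (ψ : E → ℝ) (lam : ℝ) (x c y : E) : ℝ :=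
  ψ x + (⟪c, y⟫ - ψ c) + lam / 2 * ‖gradient ψ c - y‖ ^ 2 - ⟪y, x⟫

theorem le_correlationGap {ψ : E → ℝ} {β : ℝ} (hψ : StrongConvexOn Set.univ β ψ) (lam : ℝ)
    {x c : E} (hc : DifferentiableAt ℝ ψ c) (y : E) :
    lam / 2 * ‖gradient ψ c - y‖ ^ 2 - ‖gradient ψ c - y‖ * ‖x - c‖ + β / 2 * ‖x - c‖ ^ 2 ≤
      correlationGap ψ lam x c y := by
  have hstrong := hψ.add_inner_add_le_of_hasGradientAt (Set.mem_univ c) (Set.mem_univ x)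
    hc.hasGradientAt
  have hcs := neg_le_of_abs_le (abs_real_inner_le_norm (gradient ψ c - y) (x - c))
  have hinner : ⟪gradient ψ c - y, x - c⟫ = ⟪gradient ψ c, x - c⟫ + ⟪c, y⟫ - ⟪y, x⟫ := by
    simp only [inner_sub_left, inner_sub_right, real_inner_comm c y]
    ring
  unfold correlationGap
  linarith

theorem half_sq_norm_gradient_sub_le_mul_correlationGap {ψ : E → ℝ} {β B lam : ℝ}
    (hψ : StrongConvexOn Set.univ β ψ) (hβ : 0 < β) (hβB : β ≤ B)
    (hlip : ∀ x x', ‖gradient ψ x - gradient ψ x'‖ ≤ B * ‖x - x'‖)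
    (hlam : 1 < lam * β) {x c : E} (hc : DifferentiableAt ℝ ψ c) (y : E) :
    ‖gradient ψ x - y‖ ^ 2 / 2 ≤
      B ^ 2 / (lam * β - 1) * (1 / √β + √lam) ^ 2 * correlationGap ψ lam x c y := by
  set a := ‖gradient ψ c - y‖
  set b := ‖x - c‖
  have hnorm : ‖gradient ψ x - y‖ ≤ B * (b + a / β) := by
    have htri := norm_sub_le_norm_sub_add_norm_sub (gradient ψ x) (gradient ψ c) y
    have ha : a ≤ B * (a / β) := by
      simpa only [div_mul_eq_mul_div, mul_div_assoc] using
        le_mul_of_one_le_left (norm_nonneg _) ((one_le_div hβ).2 hβB)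
    linarith [hlip x c]
  have hsq : ‖gradient ψ x - y‖ ^ 2 ≤ B ^ 2 * (b + a / β) ^ 2 := by
    rw [← mul_pow]
    exact pow_le_pow_left₀ (norm_nonneg _) hnorm 2
  have hquad := sq_add_div_mul_le (a := a) (b := b) hβ (by nlinarith : (0 : ℝ) ≤ lam)
  have hgap := mul_le_mul_of_nonneg_left (le_correlationGap hψ lam hc y (x := x))
    (by positivity : 0 ≤ B ^ 2 * (1 / √β + √lam) ^ 2)
  rw [div_mul_eq_mul_div, div_mul_eq_mul_div, le_div_iff₀ (by linarith)]
  calc ‖gradient ψ x - y‖ ^ 2 / 2 * (lam * β - 1)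
      ≤ B ^ 2 * ((b + a / β) ^ 2 * (lam * β - 1)) / 2 := by nlinarith
    _ ≤ B ^ 2 * ((1 / √β + √lam) ^ 2 * (lam * a ^ 2 - 2 * a * b + β * b ^ 2)) / 2 := by
        gcongr
    _ ≤ B ^ 2 * (1 / √β + √lam) ^ 2 * correlationGap ψ lam x c y := by linarith

section Integral

variable [MeasurableSpace E] {P Q : Measure E} {ψ : E → ℝ} {T C : E → E} (hT : Measurable T)
  (hQP : Q.map T = P) (lam : ℝ) (h1 : Integrable ψ P)
  (h2 : Integrable (fun y => ⟪C y, y⟫ - ψ (C y)) Q)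
  (h3 : Integrable (fun y => ‖gradient ψ (C y) - y‖ ^ 2) Q) (h4 : Integrable (fun y => ⟪y, T y⟫) Q)
include hT hQP h1 h2 h3 h4

theorem integrable_correlationGap :
    Integrable (fun y => correlationGap ψ lam (T y) (C y) y) Q := by
  subst hQP
  exact (((h1.comp_measurable hT).add h2).add (h3.const_mul _)).sub h4

theorem integral_correlationGap :
    ∫ y, correlationGap ψ lam (T y) (C y) y ∂Q =
      (∫ x, ψ x ∂P) + (∫ y, (⟪C y, y⟫ - ψ (C y)) ∂Q)
        + lam / 2 * (∫ y, ‖gradient ψ (C y) - y‖ ^ 2 ∂Q) - ∫ y, ⟪y, T y⟫ ∂Q := by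
  subst hQP
  have hψT : Integrable (fun y => ψ (T y)) Q := h1.comp_measurable hT
  have h12 : Integrable (fun y => ψ (T y) + (⟪C y, y⟫ - ψ (C y))) Q := hψT.add h2
  have h3' : Integrable (fun y => lam / 2 * ‖gradient ψ (C y) - y‖ ^ 2) Q := h3.const_mul _
  have h123 : Integrable (fun y => ψ (T y) + (⟪C y, y⟫ - ψ (C y))
      + lam / 2 * ‖gradient ψ (C y) - y‖ ^ 2) Q := h12.add h3'
  unfold correlationGap
  rw [integral_sub h123 h4, integral_add h12 h3', integral_add hψT h2, integral_const_mul,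
    integral_map hT.aemeasurable h1.aestronglyMeasurable]

end Integral

end CorrelationGap

theorem forward_generative_property_general {D : ℕ}
    (P Q : Measure (EuclideanSpace ℝ (Fin D)))
    [IsProbabilityMeasure P]
    -- Brenier potentials
    (ψs φs : EuclideanSpace ℝ (Fin D) → ℝ)
    (hinv : ∀ y, gradient ψs (gradient φs y) = y)
    (hQP : Q.map (gradient φs) = P)
    (hPQ : P.map (gradient ψs) = Q)
    -- discriminators
    (ψd : EuclideanSpace ℝ (Fin D) → ℝ) (hψd : Differentiable ℝ ψd)
    (βd : ℝ) (hβd : 0 < βd)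
    (hstrong : ConvexOn ℝ Set.univ (fun x => ψd x - βd / 2 * ‖x‖ ^ 2))
    (φc : EuclideanSpace ℝ (Fin D) → ℝ)
    (lam : ℝ) (hlam : 1 / βd < lam)
    -- integrability of all the integrals involved
    (hI1 : Integrable ψd P)
    (hI2 : Integrable (fun y => ⟪gradient φc y, y⟫ - ψd (gradient φc y)) Q)
    (hI3 : Integrable (fun y => ‖gradient ψd (gradient φc y) - y‖ ^ 2) Q)
    (hI4 : Integrable (fun y => ⟪y, gradient φs y⟫) Q)
    -- `∇ψ†` is `B†`-Lipschitz with `B† ≥ β†`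
    (Bd : ℝ) (hBd : βd ≤ Bd)
    (hBdLip : ∀ x x', ‖gradient ψd x - gradient ψd x'‖ ≤ Bd * ‖x - x'‖)
    (ε : ℝ)
    (hclose : (∫ x, ψd x ∂P) + (∫ y, (⟪gradient φc y, y⟫ - ψd (gradient φc y)) ∂Q)
        + lam / 2 * (∫ y, ‖gradient ψd (gradient φc y) - y‖ ^ 2 ∂Q) ≤
      (∫ y, ⟪y, gradient φs y⟫ ∂Q) + ε) :
    W2sq (P.map (gradient ψd)) Q ≤
      ENNReal.ofReal (Bd ^ 2 * ε / (lam * βd - 1)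
        * (1 / Real.sqrt βd + Real.sqrt lam) ^ 2) := by
  have hlamβ : 1 < lam * βd := by rwa [div_lt_iff₀ hβd] at hlam
  have hψ : StrongConvexOn Set.univ βd ψd := strongConvexOn_iff_convex.2 hstrong
  set K := Bd ^ 2 / (lam * βd - 1) * (1 / √βd + √lam) ^ 2
  set gap := fun y => correlationGap ψd lam (gradient φs y) (gradient φc y) y
  have hgap_int : Integrable gap Q := integrable_correlationGap (measurable_gradient φs)
    hQP lam hI1 hI2 hI3 hI4
  have hgap_le : ∫ y, gap y ∂Q ≤ ε := by
    rw [integral_correlationGap (measurable_gradient φs) hQP lam hI1 hI2 hI3 hI4]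
    linarith
  have hpt (y) : ‖gradient ψd (gradient φs y) - y‖ ^ 2 / 2 ≤ K * gap y :=
    half_sq_norm_gradient_sub_le_mul_correlationGap hψ hβd hBd hBdLip hlamβ (hψd _) y
  have hK : 0 ≤ K := by have := sub_pos.2 hlamβ; positivity
  calc W2sq (P.map (gradient ψd)) Q
      ≤ ∫⁻ y, ENNReal.ofReal (‖gradient ψd (gradient φs y) - y‖ ^ 2 / 2) ∂Q :=
        W2sq_map_le_of_leftInverse (measurable_gradient ψd) (measurable_gradient ψs) hQP hPQ hinv
    _ ≤ ∫⁻ y, ENNReal.ofReal (K * gap y) ∂Q := lintegral_mono fun y => ofReal_le_ofReal (hpt y)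
    _ = ENNReal.ofReal (K * ∫ y, gap y ∂Q) := by
        rw [← integral_const_mul, ofReal_integral_eq_lintegral_ofReal (hgap_int.const_mul K)
          (ae_of_all _ fun y => (by positivity : (0 : ℝ) ≤ _).trans (hpt y))]
    _ ≤ _ := ofReal_le_ofReal ((mul_le_mul_of_nonneg_left hgap_le hK).trans_eq (by ring))

/-- Forward generative property: if `∇ψ†` is `B†`-Lipschitz, `ψ†` has a conjugate potential
`φ†` with `1/β†`-Lipschitz gradient, and the regularized correlations are `ε`-close to the
true correlations, then `W₂²((∇ψ†)_*P, Q) ≤ (B†)²·ε/(λβ† - 1)·(1/√β† + √λ)²`. -/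
theorem forward_generative_property {D : ℕ}
    (P Q : Measure (EuclideanSpace ℝ (Fin D)))
    [IsProbabilityMeasure P] [IsProbabilityMeasure Q]
    (hP2 : Integrable (fun x => ‖x‖ ^ 2) P)
    (hQ2 : Integrable (fun y => ‖y‖ ^ 2) Q)
    -- Brenier potentials
    (ψs φs : EuclideanSpace ℝ (Fin D) → ℝ)
    (hψs : Differentiable ℝ ψs) (hψsc : ConvexOn ℝ Set.univ ψs)
    (hφs : Differentiable ℝ φs) (hφsc : ConvexOn ℝ Set.univ φs)
    (hinv : ∀ y, gradient ψs (gradient φs y) = y)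
    (hQP : Q.map (gradient φs) = P)
    (hPQ : P.map (gradient ψs) = Q)
    -- discriminators
    (ψd : EuclideanSpace ℝ (Fin D) → ℝ) (hψd : Differentiable ℝ ψd)
    (βd : ℝ) (hβd : 0 < βd)
    (hstrong : ConvexOn ℝ Set.univ (fun x => ψd x - βd / 2 * ‖x‖ ^ 2))
    (φc : EuclideanSpace ℝ (Fin D) → ℝ) (hφc : Differentiable ℝ φc)
    (hφcc : ConvexOn ℝ Set.univ φc)
    (lam : ℝ) (hlam : 1 / βd < lam)
    -- integrability of all the integrals involved
    (hI1 : Integrable ψd P)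
    (hI2 : Integrable (fun y => ⟪gradient φc y, y⟫ - ψd (gradient φc y)) Q)
    (hI3 : Integrable (fun y => ‖gradient ψd (gradient φc y) - y‖ ^ 2) Q)
    (hI4 : Integrable (fun y => ⟪y, gradient φs y⟫) Q)
    -- `∇ψ†` is `B†`-Lipschitz with `B† ≥ β†`
    (Bd : ℝ) (hBd : βd ≤ Bd)
    (hBdLip : ∀ x x', ‖gradient ψd x - gradient ψd x'‖ ≤ Bd * ‖x - x'‖)
    -- conjugate potential `φ†` of `ψ†`
    (φd : EuclideanSpace ℝ (Fin D) → ℝ) (hφd : Differentiable ℝ φd)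
    (hφdc : ConvexOn ℝ Set.univ φd)
    (hφdinv : ∀ y, gradient ψd (gradient φd y) = y)
    (hφdinv' : ∀ x, gradient φd (gradient ψd x) = x)
    (hφdLip : ∀ y y', ‖gradient φd y - gradient φd y'‖ ≤ (1 / βd) * ‖y - y'‖)
    (ε : ℝ) (hε : 0 ≤ ε)
    (hclose : (∫ x, ψd x ∂P) + (∫ y, (⟪gradient φc y, y⟫ - ψd (gradient φc y)) ∂Q)
        + lam / 2 * (∫ y, ‖gradient ψd (gradient φc y) - y‖ ^ 2 ∂Q) ≤
      (∫ y, ⟪y, gradient φs y⟫ ∂Q) + ε) :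
    W2sq (P.map (gradient ψd)) Q ≤
      ENNReal.ofReal (Bd ^ 2 * ε / (lam * βd - 1)
        * (1 / Real.sqrt βd + Real.sqrt lam) ^ 2) :=
  forward_generative_property_general P Q ψs φs hinv hQP hPQ ψd hψd βd hβd hstrong φc lam hlam hI1
    hI2 hI3 hI4 Bd hBd hBdLip ε hclose
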